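/- Let L > 0 and let u : [0,L]² → ℝ be of class C³. Define v(x,y) := −∫ₓ^L u_y(s,y) ds and suppose that v_y(x,y) + u_xxx(x,y) = 0 for all (x,y) ∈ Ω, together with the boundary conditions u(0,y) = u(L,y) = 0 and u_x(0,y) = u_x(L,y) = 0 for all y ∈ [0,L], u(x,L) = 0, u_y(x,L) = 0 and u_y(x,0) = 0 for all x ∈ [0,L], and ∫₀^L u_y(s,y) ds = 0 for all y ∈ [0,L]. Then u is identically zero on [0,L]² (and consequently v is identically zero). -/

import Mathlib

open MeasureTheory Real

noncomputable section

/-- Partial derivative in `x` of `u(x,y)`. -/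
def pdx (u : ℝ → ℝ → ℝ) (x y : ℝ) : ℝ := deriv (fun x' => u x' y) x

/-- Third partial derivative in `x` of `u(x,y)`. -/
def pdx3 (u : ℝ → ℝ → ℝ) (x y : ℝ) : ℝ := iteratedDeriv 3 (fun x' => u x' y) x

/-- Partial derivative in `y` of `u(x,y)`. -/
def pdy (u : ℝ → ℝ → ℝ) (x y : ℝ) : ℝ := deriv (fun y' => u x y') y

/-- Second partial derivative in `y` of `u(x,y)`. -/
def pdy2 (u : ℝ → ℝ → ℝ) (x y : ℝ) : ℝ := iteratedDeriv 2 (fun y' => u x y') y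

/-- The nonlocal operator `(∂ₓ⁻¹ w)(x,y) = -∫ₓ^L w(s,y) ds`. -/
def pxInv (L : ℝ) (w : ℝ → ℝ → ℝ) (x y : ℝ) : ℝ := -(∫ s in x..L, w s y)

/-- The adjoint nonlocal operator `((∂ₓ⁻¹)* w)(x,y) = ∫₀^x w(s,y) ds`. -/
def pxInvStar (w : ℝ → ℝ → ℝ) (x y : ℝ) : ℝ := ∫ s in (0:ℝ)..x, w s y

open Set Function

/-! Energy method in the variable `y`. With `v = ∂ₓ⁻¹ u_y`, the slice energy
`E(y) = ∫₀ᴸ (v² + u_x²) dx` has, by `v_y = -u_xxx` and `u_xy = u_yx`,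
`E'(y) = 2 ∫₀ᴸ (u_x u_yx - v u_xxx) dx = 2 [u_x u_y - v u_xx]₀ᴸ` (using `v_x = u_y`),
and this boundary term vanishes because `u_x` and `v` vanish at `x = 0` and `x = L`.
So `E` is constant on `[0, L]`; at `y = L` both `v` and `u_x` vanish, hence `E ≡ 0`,
so `v = u_x = 0` on the square, and `u(L, y) = 0` gives `u = 0`. -/

section OneVariable

open intervalIntegral

variable {a b : ℝ}

theorem integral_mul_deriv_sub_mul_deriv_deriv_eq_zero {f f' f'' g g' V : ℝ → ℝ}
    (hf : ∀ x ∈ uIcc a b, HasDerivAt f (f' x) x) (hf' : ∀ x ∈ uIcc a b, HasDerivAt f' (f'' x) x)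
    (hg : ∀ x ∈ uIcc a b, HasDerivAt g (g' x) x) (hV : ∀ x ∈ uIcc a b, HasDerivAt V (g x) x)
    (hint : IntervalIntegrable (fun x => f x * g' x - V x * f'' x) volume a b)
    (hfa : f a = 0) (hfb : f b = 0) (hVa : V a = 0) (hVb : V b = 0) :
    ∫ x in a..b, (f x * g' x - V x * f'' x) = 0 := by
  have hflux : ∀ x ∈ uIcc a b, HasDerivAt (fun x => f x * g x - V x * f' x)
      (f x * g' x - V x * f'' x) x := fun x hx =>
    (((hf x hx).mul (hg x hx)).sub ((hV x hx).mul (hf' x hx))).congr_deriv (by ring)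
  rw [integral_eq_sub_of_hasDerivAt hflux hint, hfa, hfb, hVa, hVb]
  ring

theorem eq_right_of_hasDerivAt_zero {f : ℝ → ℝ} (hf : ContinuousOn f (Icc a b))
    (hd : ∀ x ∈ Ioo a b, HasDerivAt f 0 x) {x : ℝ} (hx : x ∈ Icc a b) : f x = f b := by
  rcases hx.2.eq_or_lt with rfl | hxb
  · rfl
  obtain ⟨c, -, hc⟩ := exists_hasDerivAt_eq_slope f (fun _ => 0) hxb
    (hf.mono (Icc_subset_Icc_left hx.1)) fun y hy => hd y ⟨hx.1.trans_lt hy.1, hy.2⟩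
  rw [eq_div_iff (sub_ne_zero.2 hxb.ne'), zero_mul] at hc
  linarith

theorem eq_zero_of_integral_eq_zero_of_nonneg {f : ℝ → ℝ} (hab : a < b)
    (hf : ContinuousOn f (Icc a b)) (hf0 : ∀ x ∈ Icc a b, 0 ≤ f x) (h : ∫ x in a..b, f x = 0)
    {x : ℝ} (hx : x ∈ Icc a b) : f x = 0 := by
  by_contra hne
  have := integral_pos hab hf (fun y hy => hf0 y (Ioc_subset_Icc_self hy))
    ⟨x, hx, (hf0 x hx).lt_of_ne' hne⟩
  exact this.ne' h

end OneVariable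

section PartialDerivatives

variable {u : ℝ → ℝ → ℝ}

theorem hasDerivAt_pdx_fderiv {x y : ℝ} (hu : DifferentiableAt ℝ (uncurry u) (x, y)) :
    HasDerivAt (fun x' => u x' y) (fderiv ℝ (uncurry u) (x, y) (1, 0)) x :=
  hu.hasFDerivAt.comp_hasDerivAt (f := fun x' => (x', y)) x
    ((hasDerivAt_id x).prodMk (hasDerivAt_const x y))

theorem hasDerivAt_pdy_fderiv {x y : ℝ} (hu : DifferentiableAt ℝ (uncurry u) (x, y)) :
    HasDerivAt (fun y' => u x y') (fderiv ℝ (uncurry u) (x, y) (0, 1)) y :=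
  hu.hasFDerivAt.comp_hasDerivAt (f := fun y' => (x, y')) y
    ((hasDerivAt_const y x).prodMk (hasDerivAt_id y))

theorem pdx_eq_fderiv {x y : ℝ} (hu : DifferentiableAt ℝ (uncurry u) (x, y)) :
    pdx u x y = fderiv ℝ (uncurry u) (x, y) (1, 0) :=
  (hasDerivAt_pdx_fderiv hu).deriv

theorem pdy_eq_fderiv {x y : ℝ} (hu : DifferentiableAt ℝ (uncurry u) (x, y)) :
    pdy u x y = fderiv ℝ (uncurry u) (x, y) (0, 1) :=
  (hasDerivAt_pdy_fderiv hu).deriv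

theorem hasDerivAt_pdx {x y : ℝ} (hu : DifferentiableAt ℝ (uncurry u) (x, y)) :
    HasDerivAt (fun x' => u x' y) (pdx u x y) x :=
  pdx_eq_fderiv hu ▸ hasDerivAt_pdx_fderiv hu

theorem hasDerivAt_pdy {x y : ℝ} (hu : DifferentiableAt ℝ (uncurry u) (x, y)) :
    HasDerivAt (fun y' => u x y') (pdy u x y) y :=
  pdy_eq_fderiv hu ▸ hasDerivAt_pdy_fderiv hu

theorem uncurry_pdx (hu : Differentiable ℝ (uncurry u)) :
    uncurry (pdx u) = fun p => fderiv ℝ (uncurry u) p (1, 0) :=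
  funext fun p => pdx_eq_fderiv (hu p)

theorem uncurry_pdy (hu : Differentiable ℝ (uncurry u)) :
    uncurry (pdy u) = fun p => fderiv ℝ (uncurry u) p (0, 1) :=
  funext fun p => pdy_eq_fderiv (hu p)

theorem contDiff_uncurry_pdx {m n : WithTop ℕ∞} (hu : ContDiff ℝ n (uncurry u))
    (hmn : m + 1 ≤ n) : ContDiff ℝ m (uncurry (pdx u)) := by
  rw [uncurry_pdx (hu.differentiable (by rintro rfl; simp at hmn))]
  exact (ContinuousLinearMap.apply ℝ ℝ ((1 : ℝ), (0 : ℝ))).contDiff.comp (hu.fderiv_right hmn)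

theorem contDiff_uncurry_pdy {m n : WithTop ℕ∞} (hu : ContDiff ℝ n (uncurry u))
    (hmn : m + 1 ≤ n) : ContDiff ℝ m (uncurry (pdy u)) := by
  rw [uncurry_pdy (hu.differentiable (by rintro rfl; simp at hmn))]
  exact (ContinuousLinearMap.apply ℝ ℝ ((0 : ℝ), (1 : ℝ))).contDiff.comp (hu.fderiv_right hmn)

theorem pdx3_eq_pdx_pdx_pdx : pdx3 u = pdx (pdx (pdx u)) := by
  funext x y
  rw [pdx3, iteratedDeriv_eq_iterate]
  rfl

theorem fderiv_fderiv_apply_eq {g : ℝ × ℝ → ℝ} {p : ℝ × ℝ}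
    (hg : DifferentiableAt ℝ (fderiv ℝ g) p) (w w' : ℝ × ℝ) :
    fderiv ℝ (fun q => fderiv ℝ g q w) p w' = fderiv ℝ (fderiv ℝ g) p w' w := by
  rw [fderiv_clm_apply hg (differentiableAt_const w)]
  simp

theorem pdy_pdx (hu : ContDiff ℝ 2 (uncurry u)) : pdy (pdx u) = pdx (pdy u) := by
  funext x y
  have hd : Differentiable ℝ (uncurry u) := hu.differentiable two_ne_zero
  have hdd : Differentiable ℝ (fderiv ℝ (uncurry u)) :=
    (hu.fderiv_right (m := 1) le_rfl).differentiable one_ne_zero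
  have hdx := (contDiff_uncurry_pdx (m := 1) hu le_rfl).differentiable one_ne_zero
  have hdy := (contDiff_uncurry_pdy (m := 1) hu le_rfl).differentiable one_ne_zero
  rw [pdy_eq_fderiv (hdx _), pdx_eq_fderiv (hdy _), uncurry_pdx hd, uncurry_pdy hd,
    fderiv_fderiv_apply_eq (hdd _), fderiv_fderiv_apply_eq (hdd _)]
  exact hu.contDiffAt.isSymmSndFDerivAt (by simp) _ _

theorem eq_zero_of_pdx_eq_zero {L y : ℝ} (hu : Differentiable ℝ (uncurry u))
    (hux : ∀ x ∈ Ioo 0 L, pdx u x y = 0) (huL : u L y = 0) {x : ℝ} (hx : x ∈ Icc 0 L) :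
    u x y = 0 :=
  huL ▸ eq_right_of_hasDerivAt_zero
    (fun _ _ => (hasDerivAt_pdx (hu _)).continuousAt.continuousWithinAt)
    (fun x hx => hux x hx ▸ hasDerivAt_pdx (hu _)) hx

end PartialDerivatives

section ParametricIntegrals

open intervalIntegral

theorem hasDerivAt_intervalIntegral_param {f f' : ℝ → ℝ → ℝ} (hf : Continuous (uncurry f))
    (hf' : Continuous (uncurry f')) (hd : ∀ x y, HasDerivAt (f x) (f' x y) y) (a b y₀ : ℝ) :
    HasDerivAt (fun y => ∫ x in a..b, f x y) (∫ x in a..b, f' x y₀) y₀ := by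
  obtain ⟨C, hC⟩ := (isCompact_uIcc.prod (isCompact_closedBall y₀ 1)).exists_bound_of_continuousOn
    hf'.continuousOn
  exact (hasDerivAt_integral_of_dominated_loc_of_deriv_le (bound := fun _ => C)
    (Metric.ball_mem_nhds y₀ one_pos)
    (.of_forall fun y => (hf.uncurry_right y).aestronglyMeasurable)
    ((hf.uncurry_right y₀).intervalIntegrable a b)
    (hf'.uncurry_right y₀).aestronglyMeasurable
    (.of_forall fun x hx y hy =>
      hC (x, y) ⟨uIoc_subset_uIcc hx, Metric.ball_subset_closedBall hy⟩)
    intervalIntegrable_const (.of_forall fun x _ y _ => hd x y)).2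

variable {L : ℝ} {w : ℝ → ℝ → ℝ}

theorem pxInv_eq_integral (x y : ℝ) : pxInv L w x y = ∫ s in L..x, w s y := by
  rw [pxInv, integral_symm, neg_neg]

theorem pxInv_self (y : ℝ) : pxInv L w L y = 0 := by
  simp [pxInv]

theorem continuous_uncurry_pxInv (hw : Continuous (uncurry w)) :
    Continuous (uncurry (pxInv L w)) := by
  have : uncurry (pxInv L w) = fun p => ∫ s in L..p.1, w s p.2 :=
    funext fun p => pxInv_eq_integral p.1 p.2
  rw [this]
  exact continuous_parametric_intervalIntegral_of_continuous (f := fun (p : ℝ × ℝ) s => w s p.2)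
    (hw.comp (by fun_prop : Continuous fun q : (ℝ × ℝ) × ℝ => (q.2, q.1.2))) continuous_fst

theorem hasDerivAt_pxInv_left (hw : Continuous (uncurry w)) (x y : ℝ) :
    HasDerivAt (fun x' => pxInv L w x' y) (w x y) x := by
  simp_rw [pxInv_eq_integral]
  have hslice := hw.uncurry_right y
  exact integral_hasDerivAt_right (hslice.intervalIntegrable L x)
    hslice.aestronglyMeasurable.stronglyMeasurableAtFilter hslice.continuousAt

theorem hasDerivAt_pxInv_right (hw : ContDiff ℝ 1 (uncurry w)) (x y : ℝ) :
    HasDerivAt (fun y' => pxInv L w x y') (pxInv L (pdy w) x y) y :=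
  (hasDerivAt_intervalIntegral_param hw.continuous
    (contDiff_uncurry_pdy (m := 0) hw le_rfl).continuous
    (fun _ _ => hasDerivAt_pdy (hw.differentiable one_ne_zero _)) x L y).neg

end ParametricIntegrals

section Energy

open intervalIntegral

variable {L : ℝ} {u : ℝ → ℝ → ℝ}

def kpEnergy (L : ℝ) (u : ℝ → ℝ → ℝ) (y : ℝ) : ℝ :=
  ∫ x in 0..L, (pxInv L (pdy u) x y ^ 2 + pdx u x y ^ 2)

theorem hasDerivAt_kpEnergy (hu : ContDiff ℝ 2 (uncurry u)) (y : ℝ) :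
    HasDerivAt (kpEnergy L u) (∫ x in 0..L, 2 * (pxInv L (pdy u) x y * pxInv L (pdy (pdy u)) x y
      + pdx u x y * pdy (pdx u) x y)) y := by
  have huy : ContDiff ℝ 1 (uncurry (pdy u)) := contDiff_uncurry_pdy hu le_rfl
  have hux : ContDiff ℝ 1 (uncurry (pdx u)) := contDiff_uncurry_pdx hu le_rfl
  have hv := continuous_uncurry_pxInv (L := L) huy.continuous
  have hvy :=
    continuous_uncurry_pxInv (L := L) (contDiff_uncurry_pdy (m := 0) huy le_rfl).continuous
  have huxy := (contDiff_uncurry_pdy (m := 0) hux le_rfl).continuous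
  exact hasDerivAt_intervalIntegral_param
    (f := fun x y => pxInv L (pdy u) x y ^ 2 + pdx u x y ^ 2)
    (f' := fun x y => 2 * (pxInv L (pdy u) x y * pxInv L (pdy (pdy u)) x y
      + pdx u x y * pdy (pdx u) x y)) ((hv.fun_pow 2).fun_add (hux.continuous.fun_pow 2))
    (continuous_const.fun_mul ((hv.fun_mul hvy).fun_add (hux.continuous.fun_mul huxy)))
    (fun x y => (((hasDerivAt_pxInv_right huy x y).pow 2).add
      ((hasDerivAt_pdy (hux.differentiable one_ne_zero _)).pow 2)).congr_deriv (by ring)) 0 L y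

theorem hasDerivAt_kpEnergy_zero (hL : 0 ≤ L) (hu : ContDiff ℝ 3 (uncurry u)) {y : ℝ}
    (heq : ∀ x ∈ Ioo 0 L, pdy (pxInv L (pdy u)) x y + pdx3 u x y = 0)
    (hux0 : pdx u 0 y = 0) (huxL : pdx u L y = 0) (hv0 : pxInv L (pdy u) 0 y = 0) :
    HasDerivAt (kpEnergy L u) 0 y := by
  refine (hasDerivAt_kpEnergy (hu.of_le (by norm_num)) y).congr_deriv ?_
  have huy : ContDiff ℝ 2 (uncurry (pdy u)) := contDiff_uncurry_pdy hu le_rfl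
  have hux : ContDiff ℝ 2 (uncurry (pdx u)) := contDiff_uncurry_pdx hu le_rfl
  have huxx : ContDiff ℝ 1 (uncurry (pdx (pdx u))) := contDiff_uncurry_pdx hux le_rfl
  have huxxx : Continuous (uncurry (pdx (pdx (pdx u)))) :=
    (contDiff_uncurry_pdx (m := 0) huxx le_rfl).continuous
  have huyx : Continuous (uncurry (pdx (pdy u))) :=
    (contDiff_uncurry_pdx (m := 0) (huy.of_le one_le_two) le_rfl).continuous
  have hv := continuous_uncurry_pxInv (L := L) huy.continuous
  have hvy : ∀ x ∈ Ioo 0 L, pxInv L (pdy (pdy u)) x y = -pdx (pdx (pdx u)) x y := fun x hx => by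
    have hvy' : pdy (pxInv L (pdy u)) x y = pxInv L (pdy (pdy u)) x y :=
      (hasDerivAt_pxInv_right (huy.of_le one_le_two) x y).deriv
    rw [← hvy', ← pdx3_eq_pdx_pdx_pdx]
    linarith [heq x hx]
  have hflux : ∫ x in 0..L, (pdx u x y * pdx (pdy u) x y
      - pxInv L (pdy u) x y * pdx (pdx (pdx u)) x y) = 0 :=
    integral_mul_deriv_sub_mul_deriv_deriv_eq_zero
      (fun x _ => hasDerivAt_pdx (hux.differentiable two_ne_zero _))
      (fun x _ => hasDerivAt_pdx (huxx.differentiable one_ne_zero _))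
      (fun x _ => hasDerivAt_pdx (huy.differentiable two_ne_zero _))
      (fun x _ => hasDerivAt_pxInv_left huy.continuous x y)
      ((((hux.continuous.uncurry_right y).fun_mul (huyx.uncurry_right y)).fun_sub
        ((hv.uncurry_right y).fun_mul (huxxx.uncurry_right y))).intervalIntegrable 0 L)
      hux0 huxL hv0 (pxInv_self y)
  calc ∫ x in 0..L, 2 * (pxInv L (pdy u) x y * pxInv L (pdy (pdy u)) x y
        + pdx u x y * pdy (pdx u) x y)
      = ∫ x in 0..L, 2 * (pdx u x y * pdx (pdy u) x y
        - pxInv L (pdy u) x y * pdx (pdx (pdx u)) x y) :=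
        integral_congr_Ioo_of_le hL fun x hx => by
          simp only [hvy x hx, pdy_pdx (hu.of_le (by norm_num))]
          ring
    _ = 0 := by rw [intervalIntegral.integral_const_mul, hflux, mul_zero]

theorem kpEnergy_eq_kpEnergy_top (hL : 0 ≤ L) (hu : ContDiff ℝ 3 (uncurry u))
    (heq : ∀ x ∈ Ioo 0 L, ∀ y ∈ Ioo 0 L, pdy (pxInv L (pdy u)) x y + pdx3 u x y = 0)
    (hux0 : ∀ y ∈ Ioo 0 L, pdx u 0 y = 0) (huxL : ∀ y ∈ Ioo 0 L, pdx u L y = 0)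
    (hv0 : ∀ y ∈ Ioo 0 L, pxInv L (pdy u) 0 y = 0) {y : ℝ} (hy : y ∈ Icc 0 L) :
    kpEnergy L u y = kpEnergy L u L := by
  refine eq_right_of_hasDerivAt_zero (fun y _ => ?_)
    (fun y hy => hasDerivAt_kpEnergy_zero hL hu (heq · · y hy) (hux0 y hy) (huxL y hy)
      (hv0 y hy)) hy
  exact (hasDerivAt_kpEnergy (hu.of_le (by norm_num)) y).continuousAt.continuousWithinAt

theorem kpEnergy_top_eq_zero (hL : 0 ≤ L) (hu : ∀ x ∈ Icc 0 L, u x L = 0)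
    (huy : ∀ x ∈ Icc 0 L, pdy u x L = 0) : kpEnergy L u L = 0 := by
  have hv : ∀ x ∈ Icc 0 L, pxInv L (pdy u) x L = 0 := fun x hx => by
    rw [pxInv, integral_congr (g := fun _ => 0) fun s hs =>
      huy s (Icc_subset_Icc_left hx.1 (uIcc_of_le hx.2 ▸ hs))]
    simp
  have hux : ∀ x ∈ Ioo 0 L, pdx u x L = 0 := fun x hx => by
    have : (fun x' => u x' L) =ᶠ[nhds x] fun _ => 0 :=
      Filter.eventually_of_mem (isOpen_Ioo.mem_nhds hx) fun t ht => hu t (Ioo_subset_Icc_self ht)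
    exact this.deriv_eq.trans (deriv_const x 0)
  rw [kpEnergy, integral_congr_Ioo_of_le hL (g := fun _ => 0) fun x hx => by
    simp [hv x (Ioo_subset_Icc_self hx), hux x hx]]
  simp

theorem pxInv_eq_zero_and_pdx_eq_zero_of_kpEnergy_eq_zero (hL : 0 < L)
    (hu : ContDiff ℝ 1 (uncurry u)) {y : ℝ} (hE : kpEnergy L u y = 0) {x : ℝ}
    (hx : x ∈ Icc 0 L) : pxInv L (pdy u) x y = 0 ∧ pdx u x y = 0 := by
  have hv := continuous_uncurry_pxInv (L := L) (contDiff_uncurry_pdy (m := 0) hu le_rfl).continuous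
  have hux := (contDiff_uncurry_pdx (m := 0) hu le_rfl).continuous
  have h := eq_zero_of_integral_eq_zero_of_nonneg hL
    (((hv.uncurry_right y).fun_pow 2).fun_add ((hux.uncurry_right y).fun_pow 2)).continuousOn
    (fun x _ => by positivity) hE hx
  exact ((add_eq_zero_iff_of_nonneg (sq_nonneg _) (sq_nonneg _)).1 h).imp
    (pow_eq_zero_iff two_ne_zero).1 (pow_eq_zero_iff two_ne_zero).1

end Energy

/-- `λ = 0` case of the spectral uniqueness problem without drift term: if
`v(x,y) = -∫ₓ^L u_y(s,y) ds` satisfies `v_y + u_xxx = 0` on `Ω` and `u` satisfies the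
over-determined boundary conditions, then `u ≡ 0` (and consequently `v ≡ 0`) on `[0,L]²`. -/
theorem kp_spectral_uniqueness_lambda_zero (L : ℝ) (hL : 0 < L)
    (u v : ℝ → ℝ → ℝ) (hu : ContDiff ℝ 3 (fun p : ℝ × ℝ => u p.1 p.2))
    (hv : ∀ x y : ℝ, v x y = -(∫ s in x..L, pdy u s y))
    (heq : ∀ x ∈ Set.Ioo (0:ℝ) L, ∀ y ∈ Set.Ioo (0:ℝ) L,
      pdy v x y + pdx3 u x y = 0)
    (hbx : ∀ y ∈ Set.Icc (0:ℝ) L,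
      u 0 y = 0 ∧ u L y = 0 ∧ pdx u 0 y = 0 ∧ pdx u L y = 0)
    (hby : ∀ x ∈ Set.Icc (0:ℝ) L, u x L = 0 ∧ pdy u x L = 0 ∧ pdy u x 0 = 0)
    (hint : ∀ y ∈ Set.Icc (0:ℝ) L, (∫ s in (0:ℝ)..L, pdy u s y) = 0) :
    (∀ x ∈ Set.Icc (0:ℝ) L, ∀ y ∈ Set.Icc (0:ℝ) L, u x y = 0) ∧
    (∀ x ∈ Set.Icc (0:ℝ) L, ∀ y ∈ Set.Icc (0:ℝ) L, v x y = 0) := by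
  obtain rfl : v = pxInv L (pdy u) := funext₂ hv
  have hE : ∀ y ∈ Icc 0 L, kpEnergy L u y = 0 := fun y hy =>
    (kpEnergy_eq_kpEnergy_top hL.le hu heq
      (fun y hy => (hbx y (Ioo_subset_Icc_self hy)).2.2.1)
      (fun y hy => (hbx y (Ioo_subset_Icc_self hy)).2.2.2)
      (fun y hy => by rw [pxInv, hint y (Ioo_subset_Icc_self hy), neg_zero]) hy).trans
    (kpEnergy_top_eq_zero hL.le (fun x hx => (hby x hx).1) fun x hx => (hby x hx).2.1)
  have hzero : ∀ x ∈ Icc 0 L, ∀ y ∈ Icc 0 L, pxInv L (pdy u) x y = 0 ∧ pdx u x y = 0 :=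
    fun x hx y hy => pxInv_eq_zero_and_pdx_eq_zero_of_kpEnergy_eq_zero hL (hu.of_le (by norm_num))
      (hE y hy) hx
  refine ⟨fun x hx y hy => ?_, fun x hx y hy => (hzero x hx y hy).1⟩
  exact eq_zero_of_pdx_eq_zero (hu.differentiable (by norm_num))
    (fun x hx => (hzero x (Ioo_subset_Icc_self hx) y hy).2) (hbx y hy).2.1 hx

end
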